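/- Let g be a finite-dimensional Lie algebra over ℂ, σ, y ∈ g and c ∈ ℂ with c ≠ 0, and suppose ⁅σ, y⁆ = c • y. Then ad y is a nilpotent endomorphism of g; i.e., y is ad-nilpotent. -/

import Mathlib

/-- If `g` is a finite-dimensional complex Lie algebra, `⁅σ, y⁆ = c • y` with `c ≠ 0`,
then `ad y` is a nilpotent endomorphism of `g`, i.e. `y` is ad-nilpotent. -/
theorem ad_nilpotent_of_bracket_smul {g : Type*} [LieRing g] [LieAlgebra ℂ g]
    [Module.Finite ℂ g] (σ y : g) (c : ℂ) (hc : c ≠ 0)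
    (h : ⁅σ, y⁆ = c • y) : IsNilpotent (LieAlgebra.ad ℂ g y) := by
  letI : LieRing (Module.End ℂ g) := LieRing.ofAssociativeRing
  set A := LieAlgebra.ad ℂ g σ with hA
  set B := LieAlgebra.ad ℂ g y with hB
  have hAB : A * B - B * A = c • B := by
    have := (LieAlgebra.ad ℂ g).map_lie σ y
    rw [h, map_smul] at this
    simpa [Ring.lie_def] using this.symm
  have key : ∀ n : ℕ, A * B ^ n - B ^ n * A = ((n : ℂ) * c) • B ^ n := by
    intro n
    induction n with
    | zero => simp
    | succ n ih =>
      have : A * B ^ (n + 1) - B ^ (n + 1) * A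
          = (A * B - B * A) * B ^ n + B * (A * B ^ n - B ^ n * A) := by
        rw [pow_succ']
        noncomm_ring
      rw [this, hAB, ih]
      rw [pow_succ']
      push_cast
      simp only [smul_mul_assoc, mul_smul_comm]
      rw [← add_smul]
      ring_nf
  -- the endomorphism X ↦ A∘X - X∘A of End ℂ g
  let T : Module.End ℂ (Module.End ℂ g) := LieAlgebra.ad ℂ (Module.End ℂ g) A
  have : Module.Finite ℂ (Module.End ℂ g) := Module.Finite.linearMap ℂ ℂ g g
  by_contra hnil
  have hpow : ∀ n : ℕ, B ^ n ≠ 0 := fun n hn => hnil ⟨n, hn⟩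
  have heig : ∀ n : ℕ, Module.End.HasEigenvalue T ((n : ℂ) * c) := by
    intro n
    refine Module.End.hasEigenvalue_of_hasEigenvector (x := B ^ n) ⟨?_, hpow n⟩
    rw [Module.End.mem_eigenspace_iff]
    show ⁅A, B ^ n⁆ = _
    rw [Ring.lie_def, key n]
  have hinj : Function.Injective (fun n : ℕ => (n : ℂ) * c) := by
    intro m n hmn
    exact_mod_cast mul_right_cancel₀ hc hmn
  have hinf : Set.Infinite (Module.End.HasEigenvalue T) :=
    Set.infinite_of_injective_forall_mem hinj heig
  exact hinf (Module.End.finite_hasEigenvalue T)
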